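/- There exists a constant C, independent of ε and N, such that ‖E_12 − E_12^I‖_{L^∞(Ω_2)} ≤ C N^{-5/2} and ‖(E_12 − E_12^I)_x‖_{L^∞(Ω_1)} ≤ C ε^{-1} N^{-5/2}, where the subscript x denotes the partial derivative with respect to x (taken rectangle-by-rectangle for the piecewise bilinear interpolant, i.e. an essential supremum). -/

import Mathlib

/-!
Away from the corner the layer function is already negligible: since `λ_x = ρ ε β⁻¹ ln N`, the
factor `exp (-β (1 - x) / ε)` is at most `N^{-ρ} = N^{-5/2}` for `x ≤ 1 - λ_x`. So on `Ω₂` both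
`E₁₂` and its interpolant, a bilinear function on each mesh rectangle and hence bounded by its
nodal values, are `O(N^{-5/2})`. On `Ω₁` the same happens in `y` (`λ_y = ρ √ε ln N`), so
`|∂ₓE₁₂| ≤ C ε⁻¹ N^{-5/2}` there. The `x`-derivative of the interpolant on a mesh rectangle is
affine in `y`, and on each horizontal edge it is a difference quotient of `E₁₂`, which the mean
value theorem bounds by the same quantity.
-/

open MeasureTheory Real Set

noncomputable section

/-- First-order partial derivative in the x-direction. -/
def pdx (f : ℝ × ℝ → ℝ) : ℝ × ℝ → ℝ := fun p => fderiv ℝ f p (1, 0)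

/-- First-order partial derivative in the y-direction. -/
def pdy (f : ℝ × ℝ → ℝ) : ℝ × ℝ → ℝ := fun p => fderiv ℝ f p (0, 1)

/-- Mixed partial derivative `∂_x^i ∂_y^j`. -/
def pd (i j : ℕ) (f : ℝ × ℝ → ℝ) : ℝ × ℝ → ℝ := pdx^[i] (pdy^[j] f)

/-- A function coincides with a bilinear polynomial `a + bx + cy + dxy` on a set. -/
def IsBilinearOn (f : ℝ × ℝ → ℝ) (s : Set (ℝ × ℝ)) : Prop :=
  ∃ a b c d : ℝ, ∀ p ∈ s, f p = a + b * p.1 + c * p.2 + d * (p.1 * p.2)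

/-- The Shishkin-mesh node abscissas. -/
def meshX (N : ℕ) (lx : ℝ) (i : ℕ) : ℝ :=
  if i ≤ N / 2 then 2 * (i : ℝ) * (1 - lx) / (N : ℝ)
  else 1 - 2 * ((N : ℝ) - (i : ℝ)) * lx / (N : ℝ)

/-- The Shishkin-mesh node ordinates. -/
def meshY (N : ℕ) (ly : ℝ) (j : ℕ) : ℝ :=
  if j ≤ N / 3 then 3 * (j : ℝ) * ly / (N : ℝ)
  else if j ≤ 2 * N / 3 then
    (3 * (j : ℝ) / (N : ℝ) - 1) - 3 * (2 * (j : ℝ) - (N : ℝ)) * ly / (N : ℝ)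
  else 1 - 3 * ((N : ℝ) - (j : ℝ)) * ly / (N : ℝ)

/-- The mesh rectangle `τ_{ij} = [x_{i-1}, x_i] × [y_{j-1}, y_j]`. -/
def meshRect (N : ℕ) (lx ly : ℝ) (i j : ℕ) : Set (ℝ × ℝ) :=
  Icc (meshX N lx (i - 1)) (meshX N lx i) ×ˢ Icc (meshY N ly (j - 1)) (meshY N ly j)

def OmegaS (lx ly : ℝ) : Set (ℝ × ℝ) := Icc 0 (1 - lx) ×ˢ Icc ly (1 - ly)
def Omega1R (lx ly : ℝ) : Set (ℝ × ℝ) := Icc (1 - lx) 1 ×ˢ Icc ly (1 - ly)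
def Omega2R (lx ly : ℝ) : Set (ℝ × ℝ) := Icc 0 (1 - lx) ×ˢ (Icc 0 ly ∪ Icc (1 - ly) 1)
def Omega12R (lx ly : ℝ) : Set (ℝ × ℝ) := Icc (1 - lx) 1 ×ˢ (Icc 0 ly ∪ Icc (1 - ly) 1)

/-- Basic assumptions on the Shishkin mesh data (with `ρ = 2.5`). -/
def ShishkinHyp (N : ℕ) (ε β lx ly : ℝ) : Prop :=
  0 < N ∧ 6 ∣ N ∧ 0 < ε ∧ ε ≤ (N : ℝ)⁻¹ ∧ 0 < β ∧
  lx = 2.5 * ε / β * Real.log (N : ℝ) ∧ ly = 2.5 * Real.sqrt ε * Real.log (N : ℝ) ∧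
  lx ≤ 1 / 2 ∧ ly ≤ 1 / 4

/-- `gI` is the piecewise-bilinear nodal interpolant of `g` on the Shishkin mesh. -/
def IsMeshInterpolant (N : ℕ) (lx ly : ℝ) (g gI : ℝ × ℝ → ℝ) : Prop :=
  Continuous gI ∧
  (∀ i j : ℕ, 1 ≤ i → i ≤ N → 1 ≤ j → j ≤ N → IsBilinearOn gI (meshRect N lx ly i j)) ∧
  (∀ i j : ℕ, i ≤ N → j ≤ N →
    gI (meshX N lx i, meshY N ly j) = g (meshX N lx i, meshY N ly j))

def UnitSq : Set (ℝ × ℝ) := Icc 0 1 ×ˢ Icc 0 1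

/-- Bounds on the regular part `S` of the solution decomposition. -/
def BoundS (C0 : ℝ) (S : ℝ × ℝ → ℝ) : Prop :=
  ContDiff ℝ 3 S ∧ ∀ i j : ℕ, i + j ≤ 3 → ∀ p ∈ UnitSq, |pd i j S p| ≤ C0

/-- Bounds on the exponential-layer part `E₁`. -/
def BoundE1 (ε β C0 : ℝ) (E1 : ℝ × ℝ → ℝ) : Prop :=
  ContDiff ℝ 3 E1 ∧ ∀ i j : ℕ, i + j ≤ 3 → ∀ p ∈ UnitSq,
    |pd i j E1 p| ≤ C0 * ε ^ (-(i : ℝ)) * Real.exp (-β * (1 - p.1) / ε)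

/-- Bounds on the characteristic-layer part `E₂`. -/
def BoundE2 (ε C0 : ℝ) (E2 : ℝ × ℝ → ℝ) : Prop :=
  ContDiff ℝ 3 E2 ∧ ∀ i j : ℕ, i + j ≤ 3 → ∀ p ∈ UnitSq,
    |pd i j E2 p| ≤ C0 * ε ^ (-(j : ℝ) / 2) *
      (Real.exp (-p.2 / Real.sqrt ε) + Real.exp (-(1 - p.2) / Real.sqrt ε))

/-- Bounds on the corner-layer part `E₁₂`. -/
def BoundE12 (ε β C0 : ℝ) (E12 : ℝ × ℝ → ℝ) : Prop :=
  ContDiff ℝ 3 E12 ∧ ∀ i j : ℕ, i + j ≤ 3 → ∀ p ∈ UnitSq,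
    |pd i j E12 p| ≤ C0 * ε ^ (-((i : ℝ) + (j : ℝ) / 2)) * Real.exp (-β * (1 - p.1) / ε) *
      (Real.exp (-p.2 / Real.sqrt ε) + Real.exp (-(1 - p.2) / Real.sqrt ε))

/-- Membership in the bilinear finite element space `V^N`. -/
def MemVN (N : ℕ) (lx ly : ℝ) (v : ℝ × ℝ → ℝ) : Prop :=
  Continuous v ∧
  (∀ p ∈ UnitSq, (p.1 = 0 ∨ p.1 = 1 ∨ p.2 = 0 ∨ p.2 = 1) → v p = 0) ∧
  ∀ i j : ℕ, 1 ≤ i → i ≤ N → 1 ≤ j → j ≤ N → IsBilinearOn v (meshRect N lx ly i j)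

/-- The SDFEM stabilization parameter `δ`. -/
def sdDelta (N : ℕ) (lx ly Cstar : ℝ) : ℝ × ℝ → ℝ :=
  (OmegaS lx ly ∪ Omega2R lx ly).indicator fun _ => Cstar / (N : ℝ)

/-- The SDFEM bilinear form `B`. -/
def Bform (N : ℕ) (lx ly ε b c Cstar : ℝ) (v w : ℝ × ℝ → ℝ) : ℝ :=
  ∫ p in UnitSq,
    (ε * (pdx v p * pdx w p + pdy v p * pdy w p)
      + (b * pdx v p + c * v p) * w p
      + (b * pdx v p + c * v p) * (sdDelta N lx ly Cstar p * (b * pdx w p)))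

/-- The square of the SDFEM energy norm `|||·|||`. -/
def energySq (N : ℕ) (lx ly ε b c Cstar : ℝ) (v : ℝ × ℝ → ℝ) : ℝ :=
  ∫ p in UnitSq,
    ((ε + b ^ 2 * sdDelta N lx ly Cstar p) * pdx v p ^ 2
      + ε * pdy v p ^ 2 + c * v p ^ 2)

/-- The neighbourhood `Ω₀` of the point `(xs, ys)`. -/
def OmegaZero (N : ℕ) (xs ys K sx sy : ℝ) : Set (ℝ × ℝ) :=
  {p : ℝ × ℝ | p ∈ Ioo (0 : ℝ) 1 ×ˢ Ioo (0 : ℝ) 1 ∧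
    p.1 - xs ≤ K * sx * Real.log (N : ℝ) ∧ |p.2 - ys| ≤ K * sy * Real.log (N : ℝ)}

/-- `Ω₀'`: the smallest union of mesh rectangles containing `Ω₀`. -/
def OmegaZero' (N : ℕ) (lx ly xs ys K sx sy : ℝ) : Set (ℝ × ℝ) :=
  ⋃ i ∈ Finset.Icc 1 N, ⋃ j ∈ Finset.Icc 1 N,
    ⋃ (_ : volume (OmegaZero N xs ys K sx sy ∩ meshRect N lx ly i j) ≠ 0),
      meshRect N lx ly i j

open Filter Topology

lemma abs_add_mul_le_max {a b t u v : ℝ} (ht : t ∈ Icc a b) :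
    |u + v * t| ≤ max |u + v * a| |u + v * b| := by
  rcases le_total 0 v with hv | hv
  · exact abs_le_max_abs_abs (by nlinarith [ht.1]) (by nlinarith [ht.2])
  · rw [max_comm]; exact abs_le_max_abs_abs (by nlinarith [ht.2]) (by nlinarith [ht.1])

lemma exists_mem_Icc_sub_one {α : Type*} [LinearOrder α] (f : ℕ → α) {M : ℕ} (hM : 1 ≤ M)
    {x : α} (h₀ : f 0 ≤ x) (hM' : x ≤ f M) : ∃ i, 1 ≤ i ∧ i ≤ M ∧ x ∈ Icc (f (i - 1)) (f i) := by
  induction M with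
  | zero => omega
  | succ M ih =>
    rcases Nat.eq_zero_or_pos M with rfl | hM
    · exact ⟨1, le_rfl, le_rfl, h₀, hM'⟩
    · by_cases hx : x ≤ f M
      · obtain ⟨i, hi₁, hiM, hi⟩ := ih hM hx
        exact ⟨i, hi₁, hiM.trans M.le_succ, hi⟩
      · exact ⟨M + 1, by omega, le_rfl, (not_le.mp hx).le, hM'⟩

lemma hasDerivAt_pdx {E : ℝ × ℝ → ℝ} {t y : ℝ} (hE : DifferentiableAt ℝ E (t, y)) :
    HasDerivAt (fun s => E (s, y)) (pdx E (t, y)) t :=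
  hE.hasFDerivAt.comp_hasDerivAt t ((hasDerivAt_id t).prodMk (hasDerivAt_const t y))

lemma pdx_sub {f h : ℝ × ℝ → ℝ} {p : ℝ × ℝ} (hf : DifferentiableAt ℝ f p)
    (hh : DifferentiableAt ℝ h p) : pdx (fun q => f q - h q) p = pdx f p - pdx h p := by
  simp [pdx, fderiv_fun_sub hf hh]

lemma abs_sub_le_of_abs_pdx_le {E : ℝ × ℝ → ℝ} {x₁ x₂ y M : ℝ} (hE : Differentiable ℝ E)
    (hx : x₁ ≤ x₂) (hM : ∀ t ∈ Icc x₁ x₂, |pdx E (t, y)| ≤ M) :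
    |E (x₂, y) - E (x₁, y)| ≤ M * (x₂ - x₁) :=
  norm_image_sub_le_of_norm_deriv_le_segment'
    (fun _ _ => (hasDerivAt_pdx (hE _)).hasDerivWithinAt)
    (fun t ht => hM t (Ico_subset_Icc_self ht)) x₂ ⟨hx, le_rfl⟩

lemma hasFDerivAt_bilinear (a b c d : ℝ) (p : ℝ × ℝ) :
    HasFDerivAt (fun q : ℝ × ℝ => a + b * q.1 + c * q.2 + d * (q.1 * q.2))
      ((b + d * p.2) • ContinuousLinearMap.fst ℝ ℝ ℝ
        + (c + d * p.1) • ContinuousLinearMap.snd ℝ ℝ ℝ) p := by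
  have hfst : HasFDerivAt (fun q : ℝ × ℝ => q.1) (ContinuousLinearMap.fst ℝ ℝ ℝ) p :=
    hasFDerivAt_fst
  have hsnd : HasFDerivAt (fun q : ℝ × ℝ => q.2) (ContinuousLinearMap.snd ℝ ℝ ℝ) p :=
    hasFDerivAt_snd
  refine ((((hasFDerivAt_const a p).add (hfst.const_mul b)).add (hsnd.const_mul c)).add
    ((hfst.mul hsnd).const_mul d)).congr_fderiv ?_
  ext <;> simp

lemma hasFDerivAt_of_eqOn_bilinear {f : ℝ × ℝ → ℝ} {s : Set (ℝ × ℝ)} {p : ℝ × ℝ} {a b c d : ℝ}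
    (hf : ∀ q ∈ s, f q = a + b * q.1 + c * q.2 + d * (q.1 * q.2)) (hs : s ∈ 𝓝 p) :
    HasFDerivAt f ((b + d * p.2) • ContinuousLinearMap.fst ℝ ℝ ℝ
        + (c + d * p.1) • ContinuousLinearMap.snd ℝ ℝ ℝ) p :=
  (hasFDerivAt_bilinear a b c d p).congr_of_eventuallyEq (eventually_of_mem hs hf)

section Rectangle

variable {f : ℝ × ℝ → ℝ} {x₁ x₂ y₁ y₂ : ℝ}

theorem IsBilinearOn.abs_le_of_corners {K : ℝ} (hf : IsBilinearOn f (Icc x₁ x₂ ×ˢ Icc y₁ y₂))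
    (hK : ∀ x ∈ ({x₁, x₂} : Set ℝ), ∀ y ∈ ({y₁, y₂} : Set ℝ), |f (x, y)| ≤ K) :
    ∀ p ∈ Icc x₁ x₂ ×ˢ Icc y₁ y₂, |f p| ≤ K := by
  obtain ⟨a, b, c, d, hf⟩ := hf
  rintro ⟨x, y⟩ ⟨hx, hy⟩
  have hx₁₂ : x₁ ≤ x₂ := hx.1.trans hx.2
  have hy₁₂ : y₁ ≤ y₂ := hy.1.trans hy.2
  have hcorner : ∀ x' ∈ ({x₁, x₂} : Set ℝ), ∀ y' ∈ ({y₁, y₂} : Set ℝ),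
      |(a + b * x') + (c + d * x') * y'| ≤ K := by
    intro x' hx' y' hy'
    have hmem : (x', y') ∈ Icc x₁ x₂ ×ˢ Icc y₁ y₂ := by
      constructor
      · rcases hx' with rfl | rfl <;> simp [hx₁₂]
      · rcases hy' with rfl | rfl <;> simp [hy₁₂]
    calc |(a + b * x') + (c + d * x') * y'| = |f (x', y')| := by rw [hf _ hmem]; ring_nf
      _ ≤ K := hK x' hx' y' hy'
  have hedge : ∀ x' ∈ ({x₁, x₂} : Set ℝ), |(a + c * y) + (b + d * y) * x'| ≤ K := by
    intro x' hx'
    calc |(a + c * y) + (b + d * y) * x'| = |(a + b * x') + (c + d * x') * y| := by ring_nf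
      _ ≤ _ := abs_add_mul_le_max hy
      _ ≤ K := max_le (hcorner x' hx' y₁ (by simp)) (hcorner x' hx' y₂ (by simp))
  calc |f (x, y)| = |(a + c * y) + (b + d * y) * x| := by rw [hf _ ⟨hx, hy⟩]; ring_nf
    _ ≤ _ := abs_add_mul_le_max hx
    _ ≤ K := max_le (hedge x₁ (by simp)) (hedge x₂ (by simp))

theorem IsBilinearOn.differentiableAt {s : Set (ℝ × ℝ)} {p : ℝ × ℝ} (hf : IsBilinearOn f s)
    (hs : s ∈ 𝓝 p) : DifferentiableAt ℝ f p :=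
  let ⟨_, _, _, _, hf⟩ := hf
  (hasFDerivAt_of_eqOn_bilinear hf hs).differentiableAt

theorem IsBilinearOn.abs_pdx_le_of_corners {E : ℝ × ℝ → ℝ} {M : ℝ}
    (hf : IsBilinearOn f (Icc x₁ x₂ ×ˢ Icc y₁ y₂)) (hE : Differentiable ℝ E)
    (hfE : ∀ x ∈ ({x₁, x₂} : Set ℝ), ∀ y ∈ ({y₁, y₂} : Set ℝ), f (x, y) = E (x, y))
    (hM : ∀ t ∈ Icc x₁ x₂, ∀ y ∈ ({y₁, y₂} : Set ℝ), |pdx E (t, y)| ≤ M)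
    {p : ℝ × ℝ} (hp : p ∈ interior (Icc x₁ x₂ ×ˢ Icc y₁ y₂)) : |pdx f p| ≤ M := by
  obtain ⟨a, b, c, d, hf⟩ := hf
  have hpdx : pdx f p = b + d * p.2 := by
    simp [pdx, (hasFDerivAt_of_eqOn_bilinear hf (mem_interior_iff_mem_nhds.mp hp)).fderiv]
  rw [interior_prod_eq, interior_Icc, interior_Icc] at hp
  have hx : x₁ < x₂ := hp.1.1.trans hp.1.2
  have hy : y₁ ≤ y₂ := (hp.2.1.trans hp.2.2).le
  -- on each horizontal edge, `b + d y` is the difference quotient of `E` between the corners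
  have hedge : ∀ y ∈ ({y₁, y₂} : Set ℝ), |b + d * y| ≤ M := by
    intro y hy'
    have hmem : ∀ x ∈ ({x₁, x₂} : Set ℝ), (x, y) ∈ Icc x₁ x₂ ×ˢ Icc y₁ y₂ := by
      intro x hx'
      constructor
      · rcases hx' with rfl | rfl <;> simp [hx.le]
      · rcases hy' with rfl | rfl <;> simp [hy]
    have hquot : E (x₂, y) - E (x₁, y) = (b + d * y) * (x₂ - x₁) := by
      rw [← hfE x₁ (by simp) y hy', ← hfE x₂ (by simp) y hy', hf _ (hmem x₁ (by simp)),
        hf _ (hmem x₂ (by simp))]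
      ring
    have := abs_sub_le_of_abs_pdx_le hE hx.le (fun t ht => hM t ht y hy')
    rw [hquot, abs_mul, abs_of_pos (sub_pos.mpr hx)] at this
    exact le_of_mul_le_mul_right this (sub_pos.mpr hx)
  calc |pdx f p| = |b + d * p.2| := by rw [hpdx]
    _ ≤ _ := abs_add_mul_le_max ⟨hp.2.1.le, hp.2.2.le⟩
    _ ≤ M := max_le (hedge y₁ (by simp)) (hedge y₂ (by simp))

end Rectangle

section ShishkinMesh

variable {N : ℕ} {lx ly : ℝ}

lemma meshX_le_succ (hN : 2 ∣ N) (hlx₀ : 0 ≤ lx) (hlx₁ : lx ≤ 1) {i : ℕ}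
    (hi : i + 1 ≤ N) : meshX N lx i ≤ meshX N lx (i + 1) := by
  obtain ⟨m, rfl⟩ := hN
  have hm : (0 : ℝ) < m := by norm_cast; omega
  unfold meshX
  split_ifs with h₁ h₂ h₂
  · push_cast; gcongr; linarith
  · obtain rfl : i = m := by omega
    push_cast; field_simp; nlinarith
  · omega
  · push_cast; gcongr; linarith

lemma meshY_le_succ (hN : 3 ∣ N) (hly₀ : 0 ≤ ly) (hly₁ : ly ≤ 1 / 2) {j : ℕ}
    (hj : j + 1 ≤ N) : meshY N ly j ≤ meshY N ly (j + 1) := by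
  obtain ⟨m, rfl⟩ := hN
  have hm : (0 : ℝ) < m := by norm_cast; omega
  unfold meshY
  split_ifs with h₁ h₂ h₃ h₄ h₅ h₆ <;> try omega
  · push_cast; gcongr; linarith
  · obtain rfl : j = m := by omega
    push_cast; field_simp; nlinarith
  · push_cast; field_simp; nlinarith
  · obtain rfl : j = 2 * m := by omega
    push_cast; field_simp; nlinarith
  · push_cast; gcongr; linarith

lemma meshX_monotoneOn (hN : 2 ∣ N) (hlx₀ : 0 ≤ lx) (hlx₁ : lx ≤ 1) :
    MonotoneOn (meshX N lx) (Iic N) :=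
  monotoneOn_of_le_succ ordConnected_Iic fun _ _ _ hi => meshX_le_succ hN hlx₀ hlx₁ hi

lemma meshY_monotoneOn (hN : 3 ∣ N) (hly₀ : 0 ≤ ly) (hly₁ : ly ≤ 1 / 2) :
    MonotoneOn (meshY N ly) (Iic N) :=
  monotoneOn_of_le_succ ordConnected_Iic fun _ _ _ hj => meshY_le_succ hN hly₀ hly₁ hj

@[simp] lemma meshX_zero : meshX N lx 0 = 0 := by simp [meshX]

@[simp] lemma meshY_zero : meshY N ly 0 = 0 := by simp [meshY]

lemma meshX_self (hN : 0 < N) : meshX N lx N = 1 := by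
  simp [meshX, show ¬N ≤ N / 2 by omega]

lemma meshY_self (hN : 0 < N) : meshY N ly N = 1 := by
  simp [meshY, show ¬N ≤ N / 3 by omega, show ¬N ≤ 2 * N / 3 by omega]

lemma meshX_half (hN : 2 ∣ N) (hN₀ : 0 < N) : meshX N lx (N / 2) = 1 - lx := by
  obtain ⟨m, rfl⟩ := hN
  have hm : (0 : ℝ) < m := by norm_cast; omega
  simp only [meshX, le_refl, if_true, Nat.mul_div_cancel_left m two_pos]
  push_cast
  field_simp

lemma meshY_third (hN : 3 ∣ N) (hN₀ : 0 < N) : meshY N ly (N / 3) = ly := by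
  obtain ⟨m, rfl⟩ := hN
  have hm : (0 : ℝ) < m := by norm_cast; omega
  simp only [meshY, le_refl, if_true, Nat.mul_div_cancel_left m three_pos]
  push_cast
  field_simp

lemma meshY_two_thirds (hN : 3 ∣ N) (hN₀ : 0 < N) : meshY N ly (2 * N / 3) = 1 - ly := by
  obtain ⟨m, rfl⟩ := hN
  have hm : (0 : ℝ) < m := by norm_cast; omega
  rw [meshY, if_neg (by omega), if_pos le_rfl, show 2 * (3 * m) / 3 = 2 * m by omega]
  push_cast
  field_simp
  ring

lemma meshX_mem_Icc (hN : 2 ∣ N) (hN₀ : 0 < N) (hlx₀ : 0 ≤ lx) (hlx₁ : lx ≤ 1) {i : ℕ}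
    (hi : i ≤ N) : meshX N lx i ∈ Icc 0 1 := by
  have hmono := meshX_monotoneOn hN hlx₀ hlx₁
  constructor
  · simpa using hmono (Nat.zero_le N) hi (Nat.zero_le i)
  · simpa [meshX_self hN₀] using hmono hi (le_refl N) hi

lemma meshX_mem_Icc_of_le_half (hN : 2 ∣ N) (hN₀ : 0 < N) (hlx₀ : 0 ≤ lx) (hlx₁ : lx ≤ 1)
    {i : ℕ} (hi : i ≤ N / 2) : meshX N lx i ∈ Icc 0 (1 - lx) := by
  have hmono := meshX_monotoneOn hN hlx₀ hlx₁
  have hhalf : N / 2 ≤ N := Nat.div_le_self N 2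
  constructor
  · simpa using hmono (Nat.zero_le N) (hi.trans hhalf) (Nat.zero_le i)
  · simpa [meshX_half hN hN₀] using hmono (hi.trans hhalf) hhalf hi

lemma meshY_mem_Icc (hN : 3 ∣ N) (hN₀ : 0 < N) (hly₀ : 0 ≤ ly) (hly₁ : ly ≤ 1 / 2) {j : ℕ}
    (hj : j ≤ N) : meshY N ly j ∈ Icc 0 1 := by
  have hmono := meshY_monotoneOn hN hly₀ hly₁
  constructor
  · simpa using hmono (Nat.zero_le N) hj (Nat.zero_le j)
  · simpa [meshY_self hN₀] using hmono hj (le_refl N) hj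

lemma Icc_meshY_subset (hN : 3 ∣ N) (hN₀ : 0 < N) (hly₀ : 0 ≤ ly) (hly₁ : ly ≤ 1 / 2) {j : ℕ}
    (hj₁ : 1 ≤ j) (hjN : j ≤ N) {y : ℝ} (hy : y ∈ Ioo (meshY N ly (j - 1)) (meshY N ly j))
    (hy' : y ∈ Icc ly (1 - ly)) : Icc (meshY N ly (j - 1)) (meshY N ly j) ⊆ Icc ly (1 - ly) := by
  have hmono := meshY_monotoneOn hN hly₀ hly₁
  have hthird : N / 3 ≤ N := Nat.div_le_self N 3
  have htwo : 2 * N / 3 ≤ N := by omega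
  have hlow : N / 3 ≤ j - 1 := by
    by_contra! h
    have := hmono (show j ≤ N from hjN) hthird (by omega)
    rw [meshY_third hN hN₀] at this
    linarith [hy.2, hy'.1]
  have hhigh : j ≤ 2 * N / 3 := by
    by_contra! h
    have := hmono htwo (show j - 1 ≤ N by omega) (by omega)
    rw [meshY_two_thirds hN hN₀] at this
    linarith [hy.1, hy'.2]
  refine Icc_subset_Icc ?_ ?_
  · simpa [meshY_third hN hN₀] using hmono hthird (show j - 1 ≤ N by omega) hlow
  · simpa [meshY_two_thirds hN hN₀] using hmono hjN htwo hhigh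

end ShishkinMesh

section MeshInterpolant

variable {N : ℕ} {lx ly : ℝ} {g gI : ℝ × ℝ → ℝ}

theorem IsMeshInterpolant.abs_sub_le (hN : 6 ∣ N) (hN₀ : 0 < N) (hlx₀ : 0 ≤ lx) (hlx₁ : lx ≤ 1)
    (hly₀ : 0 ≤ ly) (hly₁ : ly ≤ 1 / 2) (hI : IsMeshInterpolant N lx ly g gI) {K : ℝ}
    (hK : ∀ p ∈ Icc 0 (1 - lx) ×ˢ Icc 0 1, |g p| ≤ K) :
    ∀ p ∈ Icc 0 (1 - lx) ×ˢ Icc 0 1, |g p - gI p| ≤ 2 * K := by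
  have h2 : 2 ∣ N := (Nat.dvd_mul_right 2 3).trans hN
  have h3 : 3 ∣ N := (Nat.dvd_mul_left 3 2).trans hN
  rintro ⟨x, y⟩ ⟨hx, hy⟩
  obtain ⟨i, hi₁, hiN, hxi⟩ := exists_mem_Icc_sub_one (meshX N lx) (M := N / 2) (by omega)
    (by simpa using hx.1) (by simpa [meshX_half h2 hN₀] using hx.2)
  obtain ⟨j, hj₁, hjN, hyj⟩ := exists_mem_Icc_sub_one (meshY N ly) (M := N) hN₀
    (by simpa using hy.1) (by simpa [meshY_self hN₀] using hy.2)
  have hnode : ∀ i' ≤ N / 2, ∀ j' ≤ N, |gI (meshX N lx i', meshY N ly j')| ≤ K := by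
    intro i' hi' j' hj'
    rw [hI.2.2 i' j' (by omega) hj']
    exact hK _ ⟨meshX_mem_Icc_of_le_half h2 hN₀ hlx₀ hlx₁ hi', meshY_mem_Icc h3 hN₀ hly₀ hly₁ hj'⟩
  have hgI : |gI (x, y)| ≤ K := by
    refine (hI.2.1 i j hi₁ (by omega) hj₁ hjN).abs_le_of_corners ?_ _ ⟨hxi, hyj⟩
    rintro _ (rfl | rfl) _ (rfl | rfl) <;> exact hnode _ (by omega) _ (by omega)
  calc |g (x, y) - gI (x, y)| ≤ |g (x, y)| + |gI (x, y)| := abs_sub _ _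
    _ ≤ K + K := add_le_add (hK _ ⟨hx, hy⟩) hgI
    _ = 2 * K := by ring

theorem IsMeshInterpolant.abs_pdx_sub_le (hN : 6 ∣ N) (hN₀ : 0 < N) (hlx₀ : 0 ≤ lx)
    (hlx₁ : lx ≤ 1) (hly₀ : 0 ≤ ly) (hly₁ : ly ≤ 1 / 2) (hI : IsMeshInterpolant N lx ly g gI)
    (hg : Differentiable ℝ g) {M : ℝ} (hM : ∀ p ∈ Icc 0 1 ×ˢ Icc ly (1 - ly), |pdx g p| ≤ M)
    {i j : ℕ} (hi₁ : 1 ≤ i) (hiN : i ≤ N) (hj₁ : 1 ≤ j) (hjN : j ≤ N) :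
    ∀ p ∈ interior (meshRect N lx ly i j) ∩ Omega1R lx ly,
      |pdx (fun q => g q - gI q) p| ≤ 2 * M := by
  have h2 : 2 ∣ N := (Nat.dvd_mul_right 2 3).trans hN
  have h3 : 3 ∣ N := (Nat.dvd_mul_left 3 2).trans hN
  rintro p ⟨hp, hpΩ⟩
  have hrect := hI.2.1 i j hi₁ hiN hj₁ hjN
  have hp' := hp
  rw [meshRect, interior_prod_eq, interior_Icc, interior_Icc] at hp'
  have hfine := Icc_meshY_subset h3 hN₀ hly₀ hly₁ hj₁ hjN hp'.2 hpΩ.2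
  have hcoarse : Icc (meshX N lx (i - 1)) (meshX N lx i) ⊆ Icc 0 1 :=
    Icc_subset_Icc (meshX_mem_Icc h2 hN₀ hlx₀ hlx₁ (by omega)).1
      (meshX_mem_Icc h2 hN₀ hlx₀ hlx₁ hiN).2
  have hgI : |pdx gI p| ≤ M := by
    refine hrect.abs_pdx_le_of_corners hg ?_ (fun t ht y hy => hM _ ⟨hcoarse ht, hfine ?_⟩) hp
    · rintro _ (rfl | rfl) _ (rfl | rfl) <;> exact hI.2.2 _ _ (by omega) (by omega)
    · have hy₁₂ := hp'.2.1.le.trans hp'.2.2.le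
      rcases hy with rfl | rfl <;> simp [hy₁₂]
  have hgp : |pdx g p| ≤ M := hM p ⟨⟨by linarith [hpΩ.1.1], hpΩ.1.2⟩, hpΩ.2⟩
  calc |pdx (fun q => g q - gI q) p| = |pdx g p - pdx gI p| := by
        rw [pdx_sub (hg p) (hrect.differentiableAt (mem_interior_iff_mem_nhds.mp hp))]
    _ ≤ |pdx g p| + |pdx gI p| := abs_sub _ _
    _ ≤ M + M := add_le_add hgp hgI
    _ = 2 * M := by ring

end MeshInterpolant

lemma exp_neg_div_le_rpow {N ρ δ s : ℝ} (hN : 0 < N) (hδ : 0 < δ) (hs : ρ * δ * log N ≤ s) :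
    exp (-s / δ) ≤ N ^ (-ρ) := by
  rw [rpow_def_of_pos hN, exp_le_exp, neg_div, mul_neg, neg_le_neg_iff, le_div_iff₀ hδ]
  linarith

section CornerLayer

variable {ε β C0 : ℝ} {E12 : ℝ × ℝ → ℝ}

lemma BoundE12.abs_le (hB : BoundE12 ε β C0 E12) (hC0 : 0 ≤ C0) {p : ℝ × ℝ} (hp : p ∈ UnitSq) :
    |E12 p| ≤ 2 * C0 * exp (-β * (1 - p.1) / ε) := by
  have h := hB.2 0 0 (by norm_num) p hp
  simp only [pd, Function.iterate_zero, id_eq, CharP.cast_eq_zero, zero_div, add_zero, neg_zero,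
    rpow_zero, mul_one] at h
  have hy₀ : exp (-p.2 / √ε) ≤ 1 := exp_le_one_iff.mpr (div_nonpos_of_nonpos_of_nonneg
    (neg_nonpos.mpr hp.2.1) (sqrt_nonneg ε))
  have hy₁ : exp (-(1 - p.2) / √ε) ≤ 1 := exp_le_one_iff.mpr (div_nonpos_of_nonpos_of_nonneg
    (neg_nonpos.mpr (sub_nonneg.mpr hp.2.2)) (sqrt_nonneg ε))
  calc |E12 p| ≤ _ := h
    _ ≤ C0 * exp (-β * (1 - p.1) / ε) * (1 + 1) := by gcongr
    _ = 2 * C0 * exp (-β * (1 - p.1) / ε) := by ring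

lemma BoundE12.abs_pdx_le (hB : BoundE12 ε β C0 E12) (hε : 0 ≤ ε) (hβ : 0 ≤ β) (hC0 : 0 ≤ C0)
    {p : ℝ × ℝ} (hp : p ∈ UnitSq) :
    |pdx E12 p| ≤ C0 * ε⁻¹ * (exp (-p.2 / √ε) + exp (-(1 - p.2) / √ε)) := by
  have h := hB.2 1 0 (by norm_num) p hp
  simp only [pd, Function.iterate_one, Function.iterate_zero, id_eq, Nat.cast_one,
    CharP.cast_eq_zero, zero_div, add_zero, rpow_neg_one] at h
  have hx : exp (-β * (1 - p.1) / ε) ≤ 1 := exp_le_one_iff.mpr (div_nonpos_of_nonpos_of_nonneg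
    (by nlinarith [hp.1.2]) hε)
  calc |pdx E12 p| ≤ _ := h
    _ ≤ C0 * ε⁻¹ * 1 * (exp (-p.2 / √ε) + exp (-(1 - p.2) / √ε)) := by gcongr
    _ = _ := by ring

variable {N : ℕ} {lx ly : ℝ}

lemma ShishkinHyp.lx_nonneg (hSh : ShishkinHyp N ε β lx ly) : 0 ≤ lx := by
  obtain ⟨hN₀, -, hε, -, hβ, hlx, -⟩ := hSh
  have : 0 ≤ log N := log_nonneg (by exact_mod_cast hN₀)
  exact hlx ▸ by positivity

lemma ShishkinHyp.ly_nonneg (hSh : ShishkinHyp N ε β lx ly) : 0 ≤ ly := by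
  obtain ⟨hN₀, -, -, -, -, -, hly, -⟩ := hSh
  have : 0 ≤ log N := log_nonneg (by exact_mod_cast hN₀)
  exact hly ▸ by positivity

lemma BoundE12.abs_le_rpow (hSh : ShishkinHyp N ε β lx ly) (hB : BoundE12 ε β C0 E12)
    (hC0 : 0 ≤ C0) :
    ∀ p ∈ Icc 0 (1 - lx) ×ˢ Icc 0 1, |E12 p| ≤ 2 * C0 * (N : ℝ) ^ (-(5 / 2 : ℝ)) := by
  have hlx₀ := hSh.lx_nonneg
  obtain ⟨hN₀, -, hε, -, hβ, hlx, -⟩ := hSh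
  rintro p ⟨hx, hy⟩
  refine (hB.abs_le hC0 ⟨⟨hx.1, by linarith [hx.2]⟩, hy⟩).trans ?_
  rw [show -β * (1 - p.1) / ε = -(1 - p.1) / (ε / β) by field_simp]
  have hlx' : 5 / 2 * (ε / β) * log N = lx := by rw [hlx]; ring
  gcongr
  exact exp_neg_div_le_rpow (by exact_mod_cast hN₀) (by positivity) (by linarith [hx.2])

lemma BoundE12.abs_pdx_le_rpow (hSh : ShishkinHyp N ε β lx ly) (hB : BoundE12 ε β C0 E12)
    (hC0 : 0 ≤ C0) : ∀ p ∈ Icc 0 1 ×ˢ Icc ly (1 - ly),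
      |pdx E12 p| ≤ 2 * (C0 * ε⁻¹ * (N : ℝ) ^ (-(5 / 2 : ℝ))) := by
  have hly₀ := hSh.ly_nonneg
  obtain ⟨hN₀, -, hε, -, hβ, -, hly, -⟩ := hSh
  rintro p ⟨hx, hy⟩
  have hP : ∀ s, ly ≤ s → exp (-s / √ε) ≤ (N : ℝ) ^ (-(5 / 2 : ℝ)) := fun s hs =>
    exp_neg_div_le_rpow (by exact_mod_cast hN₀) (sqrt_pos.mpr hε) (by rw [hly] at hs; linarith)
  calc |pdx E12 p| ≤ C0 * ε⁻¹ * (exp (-p.2 / √ε) + exp (-(1 - p.2) / √ε)) :=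
        hB.abs_pdx_le hε.le hβ.le hC0 ⟨hx, by linarith [hy.1], by linarith [hy.2]⟩
    _ ≤ C0 * ε⁻¹ * ((N : ℝ) ^ (-(5 / 2 : ℝ)) + (N : ℝ) ^ (-(5 / 2 : ℝ))) := by
        gcongr <;> apply hP <;> linarith [hy.1, hy.2]
    _ = _ := by ring

end CornerLayer

theorem corner_layer_interpolation_general (β C0 : ℝ) (hC0 : 0 < C0) :
    ∃ C : ℝ, 0 < C ∧
      ∀ (N : ℕ) (ε lx ly : ℝ) (E12 EI12 : ℝ × ℝ → ℝ),
        ShishkinHyp N ε β lx ly →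
        BoundE12 ε β C0 E12 →
        IsMeshInterpolant N lx ly E12 EI12 →
        (∀ p ∈ Omega2R lx ly, |E12 p - EI12 p| ≤ C * (N : ℝ) ^ (-(5 / 2 : ℝ))) ∧
        (∀ i j : ℕ, 1 ≤ i → i ≤ N → 1 ≤ j → j ≤ N →
          ∀ p ∈ interior (meshRect N lx ly i j) ∩ Omega1R lx ly,
            |pdx (fun q => E12 q - EI12 q) p| ≤ C * ε⁻¹ * (N : ℝ) ^ (-(5 / 2 : ℝ))) := by
  refine ⟨4 * C0, by positivity, fun N ε lx ly E12 EI12 hSh hB hI => ?_⟩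
  have hlx₀ := hSh.lx_nonneg
  have hly₀ := hSh.ly_nonneg
  obtain ⟨hN₀, hN, -, -, -, -, -, hlx₁, hly₁⟩ := id hSh
  refine ⟨fun p hp => ?_, fun i j hi₁ hiN hj₁ hjN p hp => ?_⟩
  · have hp' : p ∈ Icc 0 (1 - lx) ×ˢ Icc 0 1 :=
      ⟨hp.1, by rcases hp.2 with h | h <;> constructor <;> linarith [h.1, h.2]⟩
    linarith [hI.abs_sub_le hN hN₀ hlx₀ (by linarith) hly₀ (by linarith)
      (hB.abs_le_rpow hSh hC0.le) p hp']
  · linarith [hI.abs_pdx_sub_le hN hN₀ hlx₀ (by linarith) hly₀ (by linarith)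
      (hB.1.differentiable (by norm_num)) (hB.abs_pdx_le_rpow hSh hC0.le) hi₁ hiN hj₁ hjN p hp]

/-- `‖E₁₂ − E₁₂^I‖_{L^∞(Ω₂)} ≤ C N^{-5/2}` and
`‖(E₁₂ − E₁₂^I)_x‖_{L^∞(Ω₁)} ≤ C ε⁻¹ N^{-5/2}` (the derivative of the piecewise bilinear
interpolant is taken rectangle-by-rectangle, i.e. on the interiors of mesh rectangles). -/
theorem corner_layer_interpolation (β C0 : ℝ) (hβ : 0 < β) (hC0 : 0 < C0) :
    ∃ C : ℝ, 0 < C ∧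
      ∀ (N : ℕ) (ε lx ly : ℝ) (E12 EI12 : ℝ × ℝ → ℝ),
        ShishkinHyp N ε β lx ly →
        BoundE12 ε β C0 E12 →
        IsMeshInterpolant N lx ly E12 EI12 →
        (∀ p ∈ Omega2R lx ly, |E12 p - EI12 p| ≤ C * (N : ℝ) ^ (-(5 / 2 : ℝ))) ∧
        (∀ i j : ℕ, 1 ≤ i → i ≤ N → 1 ≤ j → j ≤ N →
          ∀ p ∈ interior (meshRect N lx ly i j) ∩ Omega1R lx ly,
            |pdx (fun q => E12 q - EI12 q) p| ≤ C * ε⁻¹ * (N : ℝ) ^ (-(5 / 2 : ℝ))) :=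
  corner_layer_interpolation_general β C0 hC0
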